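/- arXiv:1508.03399 — 3 statements merged into one kernel-verified Lean document; each statement's English description precedes it below -/
import Mathlib

section
/- Let n ≥ 1, let V be the F₂-vector space of all subsets of {1,...,n} with symmetric difference as addition, and let Z be an F₂-vector space. If a cocycle f : V × V → Z lies in both Z²₀(V,Z) and B²(V,Z), then f = 0. -/
/-- The coboundary `δg` of `g`, on the F₂-vector space of subsets of `{1,…,n}`
(modelled by `Finset (Fin n)` with symmetric difference as addition). -/
def coboundaryF {n : ℕ} {Z : Type*} [Add Z] (g : Finset (Fin n) → Z) :
    Finset (Fin n) × Finset (Fin n) → Z :=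
  fun p => g (symmDiff p.1 p.2) + g p.1 + g p.2

/-- `f` is a cocycle on the F₂-vector space of subsets of `{1,…,n}` with values in `Z`. -/
def IsCocycleF {n : ℕ} {Z : Type*} [AddCommGroup Z]
    (f : Finset (Fin n) × Finset (Fin n) → Z) : Prop :=
  (∀ σ, f (∅, σ) = 0) ∧ (∀ σ, f (σ, σ) = 0) ∧ (∀ σ τ, f (σ, τ) = f (τ, σ)) ∧
    (∀ σ τ, f (symmDiff σ τ, τ) = f (σ, τ))

/-- `f` belongs to `Z²₀(V,Z)`: `f(σ,{i}) = 0` whenever `i` is strictly greater than every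
element of `σ`. -/
def MemZ20 {n : ℕ} {Z : Type*} [AddCommGroup Z]
    (f : Finset (Fin n) × Finset (Fin n) → Z) : Prop :=
  ∀ (σ : Finset (Fin n)) (i : Fin n), (∀ j ∈ σ, j < i) → f (σ, {i}) = 0

lemma two_eq_zero' {Z : Type*} [AddCommGroup Z] [Module (ZMod 2) Z] (z : Z) : z + z = 0 := by
  have := two_smul (ZMod 2) z
  rw [show (2 : ZMod 2) = 0 by decide, zero_smul] at this
  exact this.symm

/-- The 2-cocycle identity for coboundaries, in characteristic 2. -/
lemma coboundary_key {n : ℕ} {Z : Type*} [AddCommGroup Z] [Module (ZMod 2) Z]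
    (g : Finset (Fin n) → Z) (σ τ ρ : Finset (Fin n)) :
    coboundaryF g (σ, symmDiff τ ρ) =
      coboundaryF g (σ, τ) + coboundaryF g (symmDiff σ τ, ρ) + coboundaryF g (τ, ρ) := by
  simp only [coboundaryF, ← symmDiff_assoc]
  have h2 := two_eq_zero' (Z := Z)
  abel_nf
  simp [two_nsmul, two_zsmul, h2]

/-- A cocycle lying in both `Z²₀(V,Z)` and `B²(V,Z)` is zero. -/
theorem cocycle_in_Z20_and_B2_eq_zero {n : ℕ} (hn : 1 ≤ n) {Z : Type*} [AddCommGroup Z]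
    [Module (ZMod 2) Z] (f : Finset (Fin n) × Finset (Fin n) → Z)
    (hcoc : IsCocycleF f) (hZ20 : MemZ20 f) (hB2 : ∃ g : Finset (Fin n) → Z, f = coboundaryF g) :
    ∀ σ τ : Finset (Fin n), f (σ, τ) = 0 := by
  obtain ⟨g, rfl⟩ := hB2
  obtain ⟨hc1, hc2, hc3, hc4⟩ := hcoc
  set F := coboundaryF g with hF
  have key : ∀ σ τ ρ : Finset (Fin n), F (σ, symmDiff τ ρ) =
      F (σ, τ) + F (symmDiff σ τ, ρ) + F (τ, ρ) := coboundary_key g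
  -- Step 1: F (σ, {i}) = 0 for all σ, i.
  have step1 : ∀ σ : Finset (Fin n), ∀ i : Fin n, F (σ, {i}) = 0 := by
    intro σ
    induction σ using Finset.strongInduction with
    | _ σ IH =>
      intro i
      by_cases hi : i ∈ σ
      · -- reduce to σ.erase i via the shift property
        have herase : symmDiff (σ.erase i) ({i} : Finset (Fin n)) = σ := by
          ext x
          simp only [Finset.mem_symmDiff, Finset.mem_erase, Finset.mem_singleton]
          constructor
          · rintro (⟨⟨_, hx⟩, _⟩ | ⟨rfl, _⟩) <;> [exact hx; exact hi]
          · intro hx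
            by_cases hxi : x = i
            · exact Or.inr ⟨hxi, fun h => h.1 hxi⟩
            · exact Or.inl ⟨⟨hxi, hx⟩, fun h => hxi h⟩
        have h4 := hc4 (σ.erase i) ({i} : Finset (Fin n))
        rw [herase] at h4
        rw [h4]
        exact IH _ (Finset.erase_ssubset hi) i
      · by_cases hlt : ∀ j ∈ σ, j < i
        · exact hZ20 σ i hlt
        · -- σ has an element > i; take the max m of σ.
          have hne : σ.Nonempty := by
            by_contra h
            rw [Finset.not_nonempty_iff_eq_empty] at h
            exact hlt (by simp [h])
          set m := σ.max' hne with hm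
          have hmem : m ∈ σ := σ.max'_mem hne
          have hmax : ∀ j ∈ σ, j ≤ m := fun j hj => σ.le_max' j hj
          have him : i < m := by
            push_neg at hlt
            obtain ⟨j, hj, hji⟩ := hlt
            have : i ≠ j := fun h => hi (h ▸ hj)
            exact lt_of_lt_of_le (lt_of_le_of_ne hji this) (hmax j hj)
          set σ' := σ.erase m with hσ'
          have hσ'lt : ∀ j ∈ σ', j < m := by
            intro j hj
            rw [hσ', Finset.mem_erase] at hj
            exact lt_of_le_of_ne (hmax j hj.2) hj.1
          have hσeq : symmDiff σ' ({m} : Finset (Fin n)) = σ := by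
            ext x
            simp only [Finset.mem_symmDiff, hσ', Finset.mem_erase, Finset.mem_singleton]
            constructor
            · rintro (⟨⟨_, hx⟩, _⟩ | ⟨rfl, _⟩) <;> [exact hx; exact hmem]
            · intro hx
              by_cases hxm : x = m
              · exact Or.inr ⟨hxm, fun h => h.1 hxm⟩
              · exact Or.inl ⟨⟨hxm, hx⟩, fun h => hxm h⟩
          -- f(σ'△{m}, {i}) = f(σ', {m}△{i}) + f(σ',{m}) + f({m},{i})   (char 2)
          have e1 := key σ' ({m} : Finset (Fin n)) ({i} : Finset (Fin n))
          rw [hσeq] at e1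
          -- e1 : F (σ', {m}△{i}) = F (σ',{m}) + F (σ,{i}) + F ({m},{i})
          have z1 : F (σ', ({m} : Finset (Fin n))) = 0 := hZ20 σ' m hσ'lt
          have z2 : F (({m} : Finset (Fin n)), ({i} : Finset (Fin n))) = 0 := by
            rw [hc3]
            exact hZ20 {i} m (by simpa using him)
          -- expand F (σ', {m}△{i}) the other way
          have hcomm : symmDiff ({m} : Finset (Fin n)) ({i} : Finset (Fin n)) =
              symmDiff ({i} : Finset (Fin n)) ({m} : Finset (Fin n)) := symmDiff_comm _ _
          have e2 := key σ' ({i} : Finset (Fin n)) ({m} : Finset (Fin n))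
          have z3 : F (symmDiff σ' ({i} : Finset (Fin n)), ({m} : Finset (Fin n))) = 0 := by
            apply hZ20
            intro j hj
            rw [Finset.mem_symmDiff] at hj
            rcases hj with ⟨hj, _⟩ | ⟨hj, _⟩
            · exact hσ'lt j hj
            · rw [Finset.mem_singleton] at hj
              exact hj ▸ him
          have z4 : F (({i} : Finset (Fin n)), ({m} : Finset (Fin n))) = 0 :=
            hZ20 {i} m (by simpa using him)
          have z5 : F (σ', ({i} : Finset (Fin n))) = 0 :=
            IH σ' (Finset.erase_ssubset hmem) i
          rw [hcomm, e2, z3, z4, z5] at e1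
          rw [z1, z2] at e1
          -- e1 : 0 + 0 + 0 = 0 + F (σ, {i}) + 0
          simpa using e1.symm
  -- Step 2: kill τ element by element.
  intro σ τ
  induction τ using Finset.strongInduction generalizing σ with
  | _ τ IH =>
    rcases Finset.eq_empty_or_nonempty τ with rfl | ⟨i, hi⟩
    · rw [hc3]; exact hc1 σ
    · have herase : symmDiff (τ.erase i) ({i} : Finset (Fin n)) = τ := by
        ext x
        simp only [Finset.mem_symmDiff, Finset.mem_erase, Finset.mem_singleton]
        constructor
        · rintro (⟨⟨_, hx⟩, _⟩ | ⟨rfl, _⟩) <;> [exact hx; exact hi]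
        · intro hx
          by_cases hxi : x = i
          · exact Or.inr ⟨hxi, fun h => h.1 hxi⟩
          · exact Or.inl ⟨⟨hxi, hx⟩, fun h => hxi h⟩
      have e := key σ (τ.erase i) ({i} : Finset (Fin n))
      rw [herase] at e
      rw [e, IH _ (Finset.erase_ssubset hi) σ, step1, step1]
      simp
end

section
/- Let n ≥ 1, let V be the F₂-vector space of all subsets of {1,...,n} with symmetric difference as addition, let Z be an F₂-vector space, and let f : V × V → Z be a cocycle. Define g : V → Z by g(∅) = 0, g({i}) = 0 for all i, and for σ = {i₁ < i₂ < ... < i_k} with k ≥ 2, g(σ) = Σ_{s=2}^{k} f({i₁,...,i_{s-1}}, {i_s}). Then the cocycle f + δg belongs to Z²₀(V,Z); in particular Z²(V,Z) = Z²₀(V,Z) + B²(V,Z). -/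
/-- Given a cocycle `f`, let `g` be defined by `g(∅) = 0`, `g({i}) = 0` and, for
`σ = {i₁ < … < i_k}` with `k ≥ 2`, `g(σ) = Σ_{s=2}^{k} f({i₁,…,i_{s-1}}, {i_s})`
(equivalently, `g(σ) = g(σ \ {max σ}) + f(σ \ {max σ}, {max σ})`). Then the cocycle
`f + δg` belongs to `Z²₀(V,Z)`; in particular, `f` is the sum of an element of
`Z²₀(V,Z)` and a coboundary, i.e. `Z²(V,Z) = Z²₀(V,Z) + B²(V,Z)`. -/
theorem cocycle_add_coboundary_mem_Z20 {n : ℕ} (hn : 1 ≤ n) {Z : Type*} [AddCommGroup Z]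
    [Module (ZMod 2) Z] (f : Finset (Fin n) × Finset (Fin n) → Z) (hcoc : IsCocycleF f)
    (g : Finset (Fin n) → Z) (hg0 : g ∅ = 0) (hg1 : ∀ i : Fin n, g {i} = 0)
    (hgrec : ∀ (σ : Finset (Fin n)) (h : σ.Nonempty), 2 ≤ σ.card →
      g σ = g (σ.erase (σ.max' h)) + f (σ.erase (σ.max' h), {σ.max' h})) :
    IsCocycleF (fun p => f p + coboundaryF g p) ∧
    MemZ20 (fun p => f p + coboundaryF g p) ∧
    (∃ (f₀ : Finset (Fin n) × Finset (Fin n) → Z) (g' : Finset (Fin n) → Z),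
      IsCocycleF f₀ ∧ MemZ20 f₀ ∧ ∀ p, f p = f₀ p + coboundaryF g' p) := by
  obtain ⟨h1, h2, h3, h4⟩ := hcoc
  have two : ∀ z : Z, z + z = 0 := fun z => by
    have h := two_smul (ZMod 2) z
    rw [show (2 : ZMod 2) = 0 by decide, zero_smul] at h
    exact h.symm
  have hcob : IsCocycleF (fun p => f p + coboundaryF g p) := by
    refine ⟨?_, ?_, ?_, ?_⟩
    · intro σ
      simp only [coboundaryF, h1]
      rw [show symmDiff (∅ : Finset (Fin n)) σ = σ by simp [symmDiff_def]]
      rw [hg0]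
      abel_nf
      rw [two_smul, two]
    · intro σ
      simp only [coboundaryF, h2, symmDiff_self]
      rw [show (⊥ : Finset (Fin n)) = ∅ from rfl, hg0]
      rw [zero_add, zero_add, two]
    · intro σ τ
      simp only [coboundaryF]
      rw [h3, symmDiff_comm]
      abel
    · intro σ τ
      simp only [coboundaryF, h4]
      rw [symmDiff_symmDiff_cancel_right]
      abel
  have hZ20 : MemZ20 (fun p => f p + coboundaryF g p) := by
    intro σ i hσi
    rcases σ.eq_empty_or_nonempty with rfl | hne
    · simp only [coboundaryF, h1]
      rw [show symmDiff (∅ : Finset (Fin n)) ({i} : Finset (Fin n)) = {i} by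
        simp [symmDiff_def], hg0, hg1, two]
      simp
    · have hi : i ∉ σ := fun h => lt_irrefl i (hσi i h)
      have hsd : symmDiff σ ({i} : Finset (Fin n)) = insert i σ := by
        ext j
        simp only [Finset.mem_symmDiff, Finset.mem_singleton, Finset.mem_insert]
        constructor
        · rintro (⟨hj, _⟩ | ⟨rfl, _⟩)
          · exact Or.inr hj
          · exact Or.inl rfl
        · rintro (rfl | hj)
          · exact Or.inr ⟨rfl, hi⟩
          · exact Or.inl ⟨hj, fun h => hi (h ▸ hj)⟩
      have hnein : (insert i σ).Nonempty := Finset.insert_nonempty _ _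
      have hmax : (insert i σ).max' hnein = i := by
        apply le_antisymm
        · apply Finset.max'_le
          intro j hj
          rcases Finset.mem_insert.mp hj with rfl | hj
          · exact le_refl _
          · exact (hσi j hj).le
        · exact Finset.le_max' _ i (Finset.mem_insert_self i σ)
      have hcard : 2 ≤ (insert i σ).card := by
        rw [Finset.card_insert_of_notMem hi]
        have := Finset.card_pos.mpr hne
        omega
      have hrec := hgrec (insert i σ) hnein hcard
      rw [hmax, Finset.erase_insert hi] at hrec
      simp only [coboundaryF, hsd, hrec, hg1]
      abel_nf
      rw [two_smul, two_smul, two, two]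
      simp
  refine ⟨hcob, hZ20, ⟨fun p => f p + coboundaryF g p, g, hcob, hZ20, ?_⟩⟩
  intro p
  rw [add_assoc, two, add_zero]
end

section
/- Let n ≥ 1, let V be the F₂-vector space of all subsets of {1,...,n} with symmetric difference as addition, and let Z be an F₂-vector space. Then Z²(V,Z) = Z²₀(V,Z) ⊕ B²(V,Z); that is, every cocycle f : V × V → Z can be written uniquely as f = f₀ + b with f₀ ∈ Z²₀(V,Z) and b ∈ B²(V,Z). -/
section Aux

variable {n : ℕ} {Z : Type*} [AddCommGroup Z] [Module (ZMod 2) Z]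

lemma char2 (x : Z) : x + x = 0 := by
  have h : (2 : ZMod 2) • x = 0 := by
    have : (2 : ZMod 2) = 0 := rfl
    rw [this, zero_smul]
  simpa [two_smul] using h

lemma char2_eq_of_add_eq_zero {x y : Z} (h : x + y = 0) : x = y := by
  have : x + (x + y) = x + 0 := by rw [h]
  have h2 : (x + x) + y = x := by rw [add_assoc]; simpa using this
  rw [char2, zero_add] at h2
  exact h2.symm

lemma sumL (c : Fin n → Z) (σ τ : Finset (Fin n)) :
    (∑ x ∈ symmDiff σ τ, c x) + (∑ x ∈ σ, c x) + (∑ x ∈ τ, c x) = 0 := by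
  have h1 : symmDiff σ τ = (σ \ τ) ∪ (τ \ σ) := by
    ext x; simp [symmDiff]
  have hd : Disjoint (σ \ τ) (τ \ σ) := by
    apply Finset.disjoint_left.2; intro a ha hb
    rw [Finset.mem_sdiff] at ha hb; exact ha.2 hb.1
  have h2 : σ = (σ \ τ) ∪ (σ ∩ τ) := by rw [Finset.sdiff_union_inter]
  have h3 : τ = (τ \ σ) ∪ (σ ∩ τ) := by rw [Finset.inter_comm, Finset.sdiff_union_inter]
  have hd2 : Disjoint (σ \ τ) (σ ∩ τ) := by
    apply Finset.disjoint_left.2; intro a ha hb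
    rw [Finset.mem_sdiff] at ha; rw [Finset.mem_inter] at hb; exact ha.2 hb.2
  have hd3 : Disjoint (τ \ σ) (σ ∩ τ) := by
    apply Finset.disjoint_left.2; intro a ha hb
    rw [Finset.mem_sdiff] at ha; rw [Finset.mem_inter] at hb; exact ha.2 hb.1
  have e2 : (∑ x ∈ σ, c x) = (∑ x ∈ σ \ τ, c x) + (∑ x ∈ σ ∩ τ, c x) := by
    rw [← Finset.sum_union hd2, ← h2]
  have e3 : (∑ x ∈ τ, c x) = (∑ x ∈ τ \ σ, c x) + (∑ x ∈ σ ∩ τ, c x) := by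
    rw [← Finset.sum_union hd3, ← h3]
  rw [h1, Finset.sum_union hd, e2, e3]
  generalize (∑ x ∈ σ \ τ, c x) = A
  generalize (∑ x ∈ τ \ σ, c x) = B
  generalize (∑ x ∈ σ ∩ τ, c x) = C
  have key : (A + B) + (A + C) + (B + C) = (A + A) + ((B + B) + (C + C)) := by abel
  rw [key, char2, char2, char2]; simp

lemma symmDiff_empty_left (σ : Finset (Fin n)) : symmDiff (∅ : Finset (Fin n)) σ = σ := by
  rw [← Finset.bot_eq_empty, bot_symmDiff]

lemma symmDiff_singleton' (σ : Finset (Fin n)) (i : Fin n) (hi : i ∉ σ) :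
    symmDiff σ {i} = insert i σ := by
  ext x
  simp [symmDiff, Finset.mem_insert]
  aesop

/-- The potential `g` built from a cocycle `f` by stripping maxima. -/
def gAux (f : Finset (Fin n) × Finset (Fin n) → Z) : Finset (Fin n) → Z
  | σ => if h : σ.Nonempty then
      f (σ.erase (σ.max' h), {σ.max' h}) + gAux f (σ.erase (σ.max' h)) else 0
  termination_by σ => σ.card
  decreasing_by exact Finset.card_erase_lt_of_mem (σ.max'_mem h)

lemma gAux_empty (f : Finset (Fin n) × Finset (Fin n) → Z) : gAux f ∅ = 0 := by
  rw [gAux]; simp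

lemma gAux_insert (f : Finset (Fin n) × Finset (Fin n) → Z) (σ : Finset (Fin n)) (i : Fin n)
    (hi : ∀ j ∈ σ, j < i) : gAux f (insert i σ) = f (σ, {i}) + gAux f σ := by
  have hne : (insert i σ).Nonempty := Finset.insert_nonempty _ _
  have hmax : (insert i σ).max' hne = i := by
    refine le_antisymm (Finset.max'_le _ _ _ ?_) (Finset.le_max' _ _ (Finset.mem_insert_self _ _))
    intro j hj
    rcases Finset.mem_insert.1 hj with rfl | hj
    · exact le_rfl
    · exact (hi j hj).le
  have hno : i ∉ σ := fun h => lt_irrefl i (hi i h)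
  rw [gAux, dif_pos hne]
  simp [hmax, Finset.erase_insert hno]

/-- A coboundary which is a cocycle lying in `Z²₀` vanishes. -/
lemma coboundary_Z20_eq_zero (h : Finset (Fin n) → Z)
    (hc : IsCocycleF (coboundaryF h)) (hz : MemZ20 (coboundaryF h)) :
    ∀ q, coboundaryF h q = 0 := by
  obtain ⟨hc1, -, -, -⟩ := hc
  have hempty : h ∅ = 0 := by
    have := hc1 ∅
    simp only [coboundaryF, symmDiff_empty_left] at this
    have e : h ∅ + h ∅ + h ∅ = (h ∅ + h ∅) + h ∅ := rfl
    rw [e, char2, zero_add] at this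
    exact this
  have hval : ∀ σ : Finset (Fin n), h σ = ∑ i ∈ σ, h {i} := by
    intro σ
    induction σ using Finset.strongInduction with
    | _ σ ih =>
      by_cases hne : σ.Nonempty
      · set i := σ.max' hne with hidef
        set σ' := σ.erase i with hs'
        have hi : ∀ j ∈ σ', j < i := fun j hj =>
          lt_of_le_of_ne (Finset.le_max' σ j (Finset.mem_of_mem_erase hj))
            (Finset.ne_of_mem_erase hj)
        have hno : i ∉ σ' := Finset.notMem_erase _ _
        have hins : insert i σ' = σ := Finset.insert_erase (σ.max'_mem hne)
        have hz' := hz σ' i hi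
        simp only [coboundaryF] at hz'
        rw [symmDiff_singleton' σ' i hno, hins] at hz'
        have hσ : h σ = h σ' + h {i} := by
          have e : h σ + h σ' + h {i} = h σ + (h σ' + h {i}) := by abel
          rw [e] at hz'
          exact char2_eq_of_add_eq_zero hz'
        have hsub : σ' ⊂ σ := by
          rw [hs']
          exact Finset.erase_ssubset (σ.max'_mem hne)
        rw [hσ, ih σ' hsub, ← hins, Finset.sum_insert hno, add_comm]
      · rw [Finset.not_nonempty_iff_eq_empty] at hne
        subst hne
        simpa using hempty
  intro q
  simp only [coboundaryF]
  rw [hval (symmDiff q.1 q.2), hval q.1, hval q.2]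
  exact sumL (fun i => h {i}) q.1 q.2

end Aux

/-- `Z²(V,Z) = Z²₀(V,Z) ⊕ B²(V,Z)`: every cocycle `f` can be written uniquely as
`f = f₀ + b` with `f₀` a cocycle in `Z²₀(V,Z)` and `b` a coboundary. -/
theorem Z2_eq_Z20_oplus_B2 {n : ℕ} (hn : 1 ≤ n) {Z : Type*} [AddCommGroup Z]
    [Module (ZMod 2) Z] (f : Finset (Fin n) × Finset (Fin n) → Z) (hcoc : IsCocycleF f) :
    ∃! p : (Finset (Fin n) × Finset (Fin n) → Z) × (Finset (Fin n) × Finset (Fin n) → Z),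
      (IsCocycleF p.1 ∧ MemZ20 p.1) ∧ (∃ g : Finset (Fin n) → Z, p.2 = coboundaryF g) ∧
        ∀ q, f q = p.1 q + p.2 q := by
  obtain ⟨h1, h2, h3, h4⟩ := hcoc
  set g : Finset (Fin n) → Z := gAux f with hgdef
  set F₀ : Finset (Fin n) × Finset (Fin n) → Z := fun q => f q + coboundaryF g q with hF₀def
  have hgsing : ∀ i : Fin n, g {i} = 0 := by
    intro i
    have e : ({i} : Finset (Fin n)) = insert i ∅ := rfl
    rw [hgdef, e, gAux_insert f ∅ i (by simp), h1, gAux_empty, add_zero]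
  -- F₀ is a cocycle
  have hF₀coc : IsCocycleF F₀ := by
    refine ⟨?_, ?_, ?_, ?_⟩
    · intro σ
      simp only [hF₀def, coboundaryF, symmDiff_empty_left, h1, hgdef, gAux_empty]
      have e : (0 : Z) + (gAux f σ + 0 + gAux f σ) = gAux f σ + gAux f σ := by abel
      rw [e, char2]
    · intro σ
      simp only [hF₀def, coboundaryF, symmDiff_self, Finset.bot_eq_empty, h2, hgdef, gAux_empty]
      have e : (0 : Z) + (0 + gAux f σ + gAux f σ) = gAux f σ + gAux f σ := by abel
      rw [e, char2]
    · intro σ τ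
      simp only [hF₀def, coboundaryF, h3 σ τ, symmDiff_comm σ τ]
      abel
    · intro σ τ
      simp only [hF₀def, coboundaryF, h4, symmDiff_symmDiff_cancel_right]
      abel
  -- F₀ lies in Z²₀
  have hF₀z : MemZ20 F₀ := by
    intro σ i hi
    have hno : i ∉ σ := fun h => lt_irrefl i (hi i h)
    simp only [hF₀def, coboundaryF]
    rw [symmDiff_singleton' σ i hno, hgdef, gAux_insert f σ i hi, ← hgdef, hgsing i]
    have e : f (σ, {i}) + (f (σ, {i}) + g σ + g σ + 0) =
        (f (σ, {i}) + f (σ, {i})) + (g σ + g σ) := by abel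
    rw [e, char2, char2, add_zero]
  have hsum : ∀ q, f q = F₀ q + coboundaryF g q := by
    intro q
    simp only [hF₀def]
    have e : (f q + coboundaryF g q) + coboundaryF g q =
        f q + (coboundaryF g q + coboundaryF g q) := by abel
    rw [e, char2, add_zero]
  refine ⟨⟨F₀, coboundaryF g⟩, ⟨⟨hF₀coc, hF₀z⟩, ⟨g, rfl⟩, hsum⟩, ?_⟩
  -- uniqueness
  rintro ⟨f₀, b⟩ ⟨⟨pc, pz⟩, ⟨g', rfl⟩, hq⟩
  have hq' : ∀ q, f q = f₀ q + coboundaryF g' q := hq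
  have pc' : IsCocycleF f₀ := pc
  have pz' : MemZ20 f₀ := pz
  have hD : ∀ q, f₀ q + F₀ q = coboundaryF (fun σ => g' σ + g σ) q := by
    intro q
    apply char2_eq_of_add_eq_zero
    simp only [coboundaryF, hF₀def]
    rw [hq' q]
    simp only [coboundaryF]
    abel_nf
    simp [two_zsmul, char2]
  have hfun : (fun q => f₀ q + F₀ q) = coboundaryF (fun σ => g' σ + g σ) := funext hD
  have hDcoc : IsCocycleF (coboundaryF (fun σ => g' σ + g σ)) := by
    rw [← hfun]
    exact ⟨fun σ => by show f₀ _ + F₀ _ = 0; rw [pc'.1, hF₀coc.1, add_zero],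
      fun σ => by show f₀ _ + F₀ _ = 0; rw [pc'.2.1, hF₀coc.2.1, add_zero],
      fun σ τ => by show f₀ _ + F₀ _ = f₀ _ + F₀ _; rw [pc'.2.2.1 σ τ, hF₀coc.2.2.1 σ τ],
      fun σ τ => by show f₀ _ + F₀ _ = f₀ _ + F₀ _; rw [pc'.2.2.2 σ τ, hF₀coc.2.2.2 σ τ]⟩
  have hDz : MemZ20 (coboundaryF (fun σ => g' σ + g σ)) := by
    rw [← hfun]
    intro σ i hi
    show f₀ _ + F₀ _ = 0
    rw [pz' σ i hi, hF₀z σ i hi, add_zero]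
  have hzero := coboundary_Z20_eq_zero _ hDcoc hDz
  have hf₀ : f₀ = F₀ := funext fun q => char2_eq_of_add_eq_zero ((hD q).trans (hzero q))
  have hb : coboundaryF g' = coboundaryF g := by
    funext q
    have e1 := hq' q
    rw [hf₀] at e1
    exact add_left_cancel (e1.symm.trans (hsum q))
  exact Prod.ext hf₀ hb
end
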